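/- Let T > 0, let π = (π_n) be a sequence of partitions of [0,T] with mesh tending to 0, let p > 2, and let x : [0,T] → ℝ be continuous with finite p-th variation along π. Write φ(t) = [x]^(p)_π(t) and assume φ is continuously differentiable with 0 < c ≤ φ′ ≤ C < ∞ on [0,T]. For q > 0 set S^{(q)}_n(t) = Σ_{t^n_{i+1} ≤ t} (φ(t^n_{i+1}) − φ(t^n_i))^{(q−2)/q} (x(t^n_{i+1}) − x(t^n_i))². If for some t ∈ [0,T] one has limsup_{n→∞} S^{(p)}_n(t) > 0, then for every q with 0 < q < p one has limsup_{n→∞} S^{(q)}_n(t) = +∞. -/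

import Mathlib

/-!
The increments `Δφ` of `φ` along `π_n` tend to `0` uniformly in `i`, because `φ` is uniformly
continuous on `[0,T]` and the mesh tends to `0`. The two weights differ by the factor
`(Δφ)^(2/p - 2/q)`, whose exponent is negative, so it exceeds any prescribed `M` once all
increments are small. Hence eventually `S^(q)_n(t) ≥ M S^(p)_n(t)` for every `M`, and a positive
limsup of `S^(p)_n(t)` forces an infinite limsup of `S^(q)_n(t)`.
-/

open Filter Topology

/-- `scaledQVSum π N φ x t ((q - 2) / q) n` is `S^(q)_n(t)`: the parameter is the exponent. -/
noncomputable def scaledQVSum (π : ℕ → ℕ → ℝ) (N : ℕ → ℕ) (φ x : ℝ → ℝ) (t s : ℝ) (n : ℕ) :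
    ℝ :=
  ∑ i ∈ Finset.range (N n),
    if π n (i + 1) ≤ t then
      (φ (π n (i + 1)) - φ (π n i)) ^ s * (x (π n (i + 1)) - x (π n i)) ^ 2
    else 0

lemma rpow_sub_mul_rpow_le_rpow {w δ s s' : ℝ} (hw : 0 ≤ w) (hwδ : w ≤ δ) (hs : s ≠ 0)
    (hs' : s' ≤ s) : δ ^ (s' - s) * w ^ s ≤ w ^ s' := by
  rcases hw.eq_or_lt with rfl | hw
  · rw [Real.zero_rpow hs, mul_zero]
    exact Real.rpow_nonneg le_rfl _
  · calc δ ^ (s' - s) * w ^ s ≤ w ^ (s' - s) * w ^ s :=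
          mul_le_mul_of_nonneg_right (Real.rpow_le_rpow_of_nonpos hw hwδ (sub_nonpos.mpr hs'))
            (Real.rpow_nonneg hw.le _)
      _ = w ^ s' := by rw [← Real.rpow_add hw, sub_add_cancel]

lemma rpow_mul_scaledQVSum_le {π : ℕ → ℕ → ℝ} {N : ℕ → ℕ} {φ : ℝ → ℝ} (x : ℝ → ℝ) (t : ℝ)
    {s s' δ : ℝ} (hs : s ≠ 0) (hs' : s' ≤ s) {n : ℕ}
    (hinc : ∀ i < N n, φ (π n (i + 1)) - φ (π n i) ∈ Set.Icc 0 δ) :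
    δ ^ (s' - s) * scaledQVSum π N φ x t s n ≤ scaledQVSum π N φ x t s' n := by
  rw [scaledQVSum, scaledQVSum, Finset.mul_sum]
  refine Finset.sum_le_sum fun i hi => ?_
  obtain ⟨hw, hwδ⟩ := hinc i (Finset.mem_range.mp hi)
  split_ifs
  · rw [← mul_assoc]
    exact mul_le_mul_of_nonneg_right (rpow_sub_mul_rpow_le_rpow hw hwδ hs hs') (sq_nonneg _)
  · rw [mul_zero]

lemma mem_Icc_of_partition {T : ℝ} {π : ℕ → ℝ} {N : ℕ} (h0 : π 0 = 0) (hN : π N = T)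
    (hmono : ∀ i < N, π i < π (i + 1)) {i : ℕ} (hi : i ≤ N) : π i ∈ Set.Icc 0 T := by
  have hmonoOn : MonotoneOn π (Set.Iic N) :=
    monotoneOn_of_le_succ Set.ordConnected_Iic fun a _ _ ha => by
      rw [Order.succ_eq_add_one] at ha ⊢
      exact (hmono a ha).le
  exact ⟨h0 ▸ hmonoOn (Nat.zero_le N) hi (Nat.zero_le i), hN ▸ hmonoOn hi Set.self_mem_Iic hi⟩

lemma eventually_forall_increment_mem_Icc {T : ℝ} {π : ℕ → ℕ → ℝ} {N : ℕ → ℕ}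
    (hπ0 : ∀ n, π n 0 = 0) (hπT : ∀ n, π n (N n) = T)
    (hπmono : ∀ n, ∀ i < N n, π n i < π n (i + 1))
    (hmesh : ∀ ε : ℝ, 0 < ε → ∀ᶠ n in atTop, ∀ i < N n, π n (i + 1) - π n i < ε)
    {φ : ℝ → ℝ} (hφcont : ContinuousOn φ (Set.Icc 0 T)) (hφmono : MonotoneOn φ (Set.Icc 0 T))
    {δ : ℝ} (hδ : 0 < δ) :
    ∀ᶠ n in atTop, ∀ i < N n, φ (π n (i + 1)) - φ (π n i) ∈ Set.Icc 0 δ := by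
  obtain ⟨η, hη, hφη⟩ := Metric.uniformContinuousOn_iff.mp
    (isCompact_Icc.uniformContinuousOn_of_continuous hφcont) δ hδ
  filter_upwards [hmesh η hη] with n hn i hi
  have ha := mem_Icc_of_partition (hπ0 n) (hπT n) (hπmono n) hi.le
  have hb := mem_Icc_of_partition (hπ0 n) (hπT n) (hπmono n) hi
  have hab := (hπmono n i hi).le
  have hclose : dist (π n (i + 1)) (π n i) < η := by
    rw [Real.dist_eq, abs_of_nonneg (sub_nonneg.mpr hab)]
    exact hn i hi
  have hinc := hφη _ hb _ ha hclose
  rw [Real.dist_eq] at hinc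
  exact ⟨sub_nonneg.mpr (hφmono ha hb hab), (le_abs_self _).trans hinc.le⟩

lemma limsup_coe_eq_top_of_forall_eventually_mul_le {α : Type*} {l : Filter α} {u v : α → ℝ}
    (hu : 0 < limsup (fun n => (u n : EReal)) l) (huv : ∀ M : ℝ, 0 < M → ∀ᶠ n in l, M * u n ≤ v n) :
    limsup (fun n => (v n : EReal)) l = ⊤ := by
  obtain ⟨z, hz0, hzu⟩ := exists_between hu
  lift z to ℝ using ⟨(hzu.trans_le le_top).ne, ne_bot_of_gt hz0⟩ with a
  have ha : (0 : ℝ) < a := mod_cast hz0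
  have hfreq : ∃ᶠ n in l, a < u n :=
    (frequently_lt_of_lt_limsup isCobounded_le_of_bot hzu).mono fun n hn => mod_cast hn
  rw [EReal.eq_top_iff_forall_lt]
  intro K
  set M := (|K| + 1) / a
  have hMa : M * a = |K| + 1 := div_mul_cancel₀ _ ha.ne'
  have hv : ∃ᶠ n in l, ((|K| + 1 : ℝ) : EReal) ≤ v n := by
    refine (hfreq.and_eventually (huv M (by positivity))).mono fun n ⟨han, hMuv⟩ => ?_
    have : M * a ≤ M * u n := mul_le_mul_of_nonneg_left han.le (by positivity)
    exact mod_cast hMa ▸ this.trans hMuv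
  calc (K : EReal) < ((|K| + 1 : ℝ) : EReal) := mod_cast (le_abs_self K).trans_lt (lt_add_one _)
    _ ≤ _ := le_limsup_of_frequently_le hv

theorem scaled_qv_switch_limsup_top_of_limsup_pos_general
    (T : ℝ)
    (π : ℕ → ℕ → ℝ) (N : ℕ → ℕ)
    (hπ0 : ∀ n, π n 0 = 0)
    (hπT : ∀ n, π n (N n) = T)
    (hπmono : ∀ n, ∀ i < N n, π n i < π n (i + 1))
    (hmesh : ∀ ε : ℝ, 0 < ε → ∀ᶠ n in atTop, ∀ i < N n, π n (i + 1) - π n i < ε)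
    (p : ℝ) (hp : 2 < p)
    (x : ℝ → ℝ)
    (φ : ℝ → ℝ)
    (hφcont : ContinuousOn φ (Set.Icc 0 T))
    (hφmono : MonotoneOn φ (Set.Icc 0 T))
    (t : ℝ)
    (hsup : (0 : EReal) < Filter.limsup (fun n => (((fun n => ∑ i ∈ Finset.range (N n),
        if π n (i + 1) ≤ t then
          (φ (π n (i + 1)) - φ (π n i)) ^ ((p - 2) / p)
            * (x (π n (i + 1)) - x (π n i)) ^ 2
        else 0) n : ℝ) : EReal)) atTop) :
    ∀ q : ℝ, 0 < q → q < p →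
      Filter.limsup (fun n => (((fun n => ∑ i ∈ Finset.range (N n),
        if π n (i + 1) ≤ t then
          (φ (π n (i + 1)) - φ (π n i)) ^ ((q - 2) / q)
            * (x (π n (i + 1)) - x (π n i)) ^ 2
        else 0) n : ℝ) : EReal)) atTop = ⊤ := by
  intro q hq hqp
  have hp0 : (p - 2) / p ≠ 0 := div_ne_zero (by linarith) (by linarith)
  have hexp : (q - 2) / q < (p - 2) / p := by
    rw [sub_div, sub_div, div_self hq.ne', div_self (by linarith)]
    linarith [div_lt_div_of_pos_left two_pos hq hqp]
  refine limsup_coe_eq_top_of_forall_eventually_mul_le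
    (u := scaledQVSum π N φ x t ((p - 2) / p)) (v := scaledQVSum π N φ x t ((q - 2) / q))
    hsup fun M hM => ?_
  -- `δ := M ^ r⁻¹` with `r = (q - 2) / q - (p - 2) / p < 0`: increments `Δφ ≤ δ` give `Δφ ^ r ≥ M`
  have hδ : 0 < M ^ ((q - 2) / q - (p - 2) / p)⁻¹ := Real.rpow_pos_of_pos hM _
  filter_upwards [eventually_forall_increment_mem_Icc hπ0 hπT hπmono hmesh hφcont hφmono hδ]
    with n hinc
  have hMδ := Real.rpow_inv_rpow hM.le (sub_neg.mpr hexp).ne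
  exact hMδ ▸ rpow_mul_scaledQVSum_le x t hp0 hexp.le hinc

/-- If the limsup of the scaled quadratic variation sums of index `p` at some
`t ∈ [0,T]` is strictly positive, then for every `0 < q < p` the limsup of the index-`q` sums
is `+∞`. -/
theorem scaled_qv_switch_limsup_top_of_limsup_pos
    (T : ℝ) (hT : 0 < T)
    (π : ℕ → ℕ → ℝ) (N : ℕ → ℕ)
    (hN : ∀ n, 0 < N n)
    (hπ0 : ∀ n, π n 0 = 0)
    (hπT : ∀ n, π n (N n) = T)
    (hπmono : ∀ n, ∀ i < N n, π n i < π n (i + 1))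
    (hmesh : ∀ ε : ℝ, 0 < ε → ∀ᶠ n in atTop, ∀ i < N n, π n (i + 1) - π n i < ε)
    (p : ℝ) (hp : 2 < p)
    (x : ℝ → ℝ) (hx : ContinuousOn x (Set.Icc 0 T))
    (φ : ℝ → ℝ)
    (hφcont : ContinuousOn φ (Set.Icc 0 T))
    (hφmono : MonotoneOn φ (Set.Icc 0 T))
    (hφ : ∀ t ∈ Set.Icc 0 T,
      Tendsto (fun n => ∑ i ∈ Finset.range (N n),
          if π n (i + 1) ≤ t then |x (π n (i + 1)) - x (π n i)| ^ p else 0)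
        atTop (𝓝 (φ t)))
    (φ' : ℝ → ℝ) (c C : ℝ) (hc : 0 < c)
    (hderiv : ∀ t ∈ Set.Icc 0 T, HasDerivAt φ (φ' t) t)
    (hφ'cont : ContinuousOn φ' (Set.Icc 0 T))
    (hφ'bd : ∀ t ∈ Set.Icc 0 T, c ≤ φ' t ∧ φ' t ≤ C)
    (t : ℝ) (ht : t ∈ Set.Icc 0 T)
    (hsup : (0 : EReal) < Filter.limsup (fun n => (((fun n => ∑ i ∈ Finset.range (N n),
        if π n (i + 1) ≤ t then
          (φ (π n (i + 1)) - φ (π n i)) ^ ((p - 2) / p)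
            * (x (π n (i + 1)) - x (π n i)) ^ 2
        else 0) n : ℝ) : EReal)) atTop) :
    ∀ q : ℝ, 0 < q → q < p →
      Filter.limsup (fun n => (((fun n => ∑ i ∈ Finset.range (N n),
        if π n (i + 1) ≤ t then
          (φ (π n (i + 1)) - φ (π n i)) ^ ((q - 2) / q)
            * (x (π n (i + 1)) - x (π n i)) ^ 2
        else 0) n : ℝ) : EReal)) atTop = ⊤ :=
  scaled_qv_switch_limsup_top_of_limsup_pos_general T π N hπ0 hπT hπmono hmesh p hp x φ hφcont
    hφmono t hsup
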